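/- The derivative of the Mehler-type kernel: for 0 < s < 1, the kernel K_s(x,y) = c_k ((1-s²)/(4s))^{k+1/2} exp(-(1/4)(s+1/s)(x²+y²)) E_k(((1-s²)/(2s))x, y) satisfies T_{k,x} K_s(x,y) = -(1/2)[s(x+y) + (1/s)(x-y)] K_s(x,y), where T_{k,x} is the Dunkl operator acting in the variable x. -/

import Mathlib

/-
The Gaussian factor `exp (-(s + 1/s)(x² + y²)/4)` of `K_s` is even, so `T_k` acts on it by the
ordinary product rule and contributes `-(s + 1/s) x / 2`. The remaining factor
`u ↦ E_k(λu, y)`, `λ = (1 - s²)/(2s)`, is an eigenfunction of `T_k` with eigenvalue `λy`, and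
`λy - (s + 1/s) x / 2` is the claimed multiplier. Writing `E_k(w, 1)` through the regularized
series `₀F̃₁(; a; z)`, the eigenfunction property reduces to `∂_z ₀F̃₁(; a; z) = ₀F̃₁(; a + 1; z)`
and the contiguous relation `₀F̃₁(; a; z) = a ₀F̃₁(; a + 1; z) + z ₀F̃₁(; a + 2; z)`.
-/

open MeasureTheory Real

/-- The Laguerre polynomial of index `α`, via the Rodrigues formula. -/
noncomputable def lag (α : ℝ) (n : ℕ) (x : ℝ) : ℝ :=
  (1 / (n.factorial : ℝ)) * x ^ (-α) * Real.exp x *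
    iteratedDeriv n (fun t : ℝ => t ^ ((n : ℝ) + α) * Real.exp (-t)) x

/-- The generalized (Dunkl–)Hermite polynomial `H_n^k`. -/
noncomputable def genHermite (k : ℝ) (n : ℕ) (x : ℝ) : ℝ :=
  if n % 2 = 0 then
    (-1) ^ (n / 2) *
      Real.sqrt (((n / 2).factorial : ℝ) / Real.Gamma ((n / 2 : ℕ) + k + 1/2)) *
        lag (k - 1/2) (n / 2) (x ^ 2)
  else
    (-1) ^ (n / 2) *
      Real.sqrt (((n / 2).factorial : ℝ) / Real.Gamma ((n / 2 : ℕ) + k + 3/2)) *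
        x * lag (k + 1/2) (n / 2) (x ^ 2)

/-- The Dunkl–Hermite function `h_n^k(x) = e^{-x²/2} H_n^k(x)`. -/
noncomputable def dunklHermite (k : ℝ) (n : ℕ) (x : ℝ) : ℝ :=
  Real.exp (-x ^ 2 / 2) * genHermite k n x

/-- `j_α(it)`: the normalized Bessel function at a purely imaginary argument. -/
noncomputable def besselI (α t : ℝ) : ℝ :=
  Real.Gamma (α + 1) *
    ∑' n : ℕ, (t / 2) ^ (2 * n) / ((n.factorial : ℝ) * Real.Gamma ((n : ℝ) + α + 1))

/-- The rank-one Dunkl kernel. -/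
noncomputable def dunklKernel (k x y : ℝ) : ℝ :=
  besselI (k - 1/2) (x * y) + (x * y) / (2 * k + 1) * besselI (k + 1/2) (x * y)

/-- The normalizing constant `c_k = (∫_ℝ e^{-x²}|x|^{2k}dx)⁻¹`. -/
noncomputable def ck (k : ℝ) : ℝ :=
  (∫ x : ℝ, Real.exp (-x ^ 2) * |x| ^ (2 * k))⁻¹

/-- The Mehler kernel `U_k(r,y,z) = Σ r^n h_n^k(y) h_n^k(z)`. -/
noncomputable def mehlerKernel (k r y z : ℝ) : ℝ :=
  ∑' n : ℕ, r ^ n * dunklHermite k n y * dunklHermite k n z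

/-- The Dunkl–Hermite heat kernel `P_k(t,x,y) = Σ e^{-t(2n+2k+1)} h_n^k(x) h_n^k(y)`. -/
noncomputable def heatKernel (k t x y : ℝ) : ℝ :=
  ∑' n : ℕ, Real.exp (-t * (2 * n + 2 * k + 1)) * dunklHermite k n x * dunklHermite k n y

/-- The Mehler-type kernel `K_s(x,y)`. -/
noncomputable def Ks (k s x y : ℝ) : ℝ :=
  ck k * ((1 - s ^ 2) / (4 * s)) ^ (k + 1/2) *
    Real.exp (-(1/4) * (s + 1/s) * (x ^ 2 + y ^ 2)) *
      dunklKernel k (((1 - s ^ 2) / (2 * s)) * x) y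

open Filter

noncomputable def besselCoeff (a : ℝ) (n : ℕ) : ℝ := ((n.factorial : ℝ) * Gamma (n + a))⁻¹

/-- The regularized hypergeometric function `₀F̃₁(; a; z)`, so that
`besselSeries a ((t / 2) ^ 2) = (t / 2) ^ (1 - a) * I_{a-1}(t)`. Mathlib's `Γ` vanishes at its
poles, so the corresponding coefficients are `0`. -/
noncomputable def besselSeries (a z : ℝ) : ℝ := ∑' n : ℕ, besselCoeff a n * z ^ n

lemma succ_mul_besselCoeff_succ (a : ℝ) (n : ℕ) :
    ((n : ℝ) + 1) * besselCoeff a (n + 1) = besselCoeff (a + 1) n := by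
  unfold besselCoeff
  push_cast [Nat.factorial_succ]
  rw [show (n : ℝ) + 1 + a = n + (a + 1) by ring, mul_assoc, mul_inv, ← mul_assoc,
    mul_inv_cancel₀ (by positivity), one_mul]

lemma besselCoeff_eq_mul (a : ℝ) (n : ℕ) :
    besselCoeff a n = (n + a) * besselCoeff (a + 1) n := by
  unfold besselCoeff
  rcases eq_or_ne ((n : ℝ) + a) 0 with h | h
  · simp [h]
  · rw [← add_assoc, Gamma_add_one h, mul_left_comm, mul_inv, mul_inv, ← mul_assoc,
      mul_inv_cancel₀ h, one_mul, mul_inv]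

lemma eventually_abs_besselCoeff_le (a : ℝ) :
    ∀ᶠ n : ℕ in atTop, |besselCoeff a n| ≤ (n.factorial : ℝ)⁻¹ := by
  filter_upwards [eventually_ge_atTop ⌈2 - a⌉₊] with n hn
  have h2 : (2 : ℝ) ≤ n + a := by linarith [(Nat.ceil_le.mp hn : 2 - a ≤ n)]
  have hΓ : 1 ≤ Gamma (n + a) :=
    Gamma_two ▸ Gamma_strictMonoOn_Ici.monotoneOn Set.self_mem_Ici h2 h2
  unfold besselCoeff
  rw [abs_of_pos (by positivity)]
  exact inv_anti₀ (by positivity) (le_mul_of_one_le_right (by positivity) hΓ)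

lemma summable_norm_besselCoeff_mul_pow (a z : ℝ) :
    Summable fun n => ‖besselCoeff a n * z ^ n‖ := by
  refine .of_norm_bounded_eventually_nat (Real.summable_pow_div_factorial |z|) ?_
  filter_upwards [eventually_abs_besselCoeff_le a] with n hn
  rw [norm_norm, norm_mul, norm_pow, Real.norm_eq_abs, Real.norm_eq_abs, mul_comm,
    div_eq_mul_inv]
  exact mul_le_mul_of_nonneg_left hn (by positivity)

lemma hasSum_besselSeries (a z : ℝ) :
    HasSum (fun n : ℕ => besselCoeff a n * z ^ n) (besselSeries a z) :=
  (summable_norm_besselCoeff_mul_pow a z).of_norm.hasSum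

lemma hasSum_besselCoeff_mul_deriv_pow (a z : ℝ) :
    HasSum (fun n : ℕ => besselCoeff a n * (n * z ^ (n - 1))) (besselSeries (a + 1) z) := by
  rw [← hasSum_nat_add_iff' 1]
  simpa [Nat.add_sub_cancel, ← mul_assoc, mul_comm _ ((_ : ℝ) + 1),
    succ_mul_besselCoeff_succ] using hasSum_besselSeries (a + 1) z

theorem hasDerivAt_besselSeries (a z : ℝ) :
    HasDerivAt (besselSeries a) (besselSeries (a + 1) z) z := by
  set R := |z| + 1
  have hz : z ∈ Metric.ball (0 : ℝ) R := by simp [R]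
  have hu : Summable fun n : ℕ => ‖besselCoeff a n * (n * R ^ (n - 1))‖ := by
    rw [← summable_nat_add_iff 1]
    simpa [← mul_assoc, mul_comm _ ((_ : ℝ) + 1), succ_mul_besselCoeff_succ]
      using summable_norm_besselCoeff_mul_pow (a + 1) R
  have hderiv := hasDerivAt_tsum_of_isPreconnected hu Metric.isOpen_ball
    (convex_ball (0 : ℝ) R).isPreconnected
    (fun n y _ => (hasDerivAt_pow n y).const_mul (besselCoeff a n))
    (fun n y hy => ?_) hz (hasSum_besselSeries a z).summable hz
  · rwa [(hasSum_besselCoeff_mul_deriv_pow a z).tsum_eq] at hderiv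
  · rw [mem_ball_zero_iff, Real.norm_eq_abs] at hy
    have hyR : |y| ≤ |R| := hy.le.trans (le_abs_self R)
    simp only [norm_mul, norm_pow, Real.norm_eq_abs]
    gcongr

theorem besselSeries_contiguous (a z : ℝ) :
    besselSeries a z = a * besselSeries (a + 1) z + z * besselSeries (a + 2) z := by
  have h₁ := (hasSum_besselSeries (a + 1) z).mul_left a
  have h₂ := (hasSum_besselCoeff_mul_deriv_pow (a + 1) z).mul_left z
  rw [show a + 1 + 1 = a + 2 by ring] at h₂
  rw [← (h₁.add h₂).tsum_eq, besselSeries]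
  congr 1 with n
  rw [besselCoeff_eq_mul]
  cases n with
  | zero => simp
  | succ m => simp only [Nat.add_sub_cancel, pow_succ]; push_cast; ring

noncomputable def dunklOp (k : ℝ) (f : ℝ → ℝ) (x : ℝ) : ℝ :=
  deriv f x + k * (f x - f (-x)) / x

lemma dunklOp_const_mul (k c : ℝ) (f : ℝ → ℝ) (x : ℝ) :
    dunklOp k (fun u => c * f u) x = c * dunklOp k f x := by
  simp only [dunklOp, deriv_const_mul_field']
  ring

lemma dunklOp_comp_mul_left (k c : ℝ) (f : ℝ → ℝ) (x : ℝ) :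
    dunklOp k (fun u => f (c * u)) x = c * dunklOp k f (c * x) := by
  unfold dunklOp
  rw [deriv_comp_mul_left, smul_eq_mul]
  beta_reduce
  rcases eq_or_ne c 0 with rfl | hc
  · simp
  · rcases eq_or_ne x 0 with rfl | hx
    · simp
    · field_simp

lemma dunklOp_even_mul (k : ℝ) {φ f : ℝ → ℝ} {x : ℝ} (hφ : ∀ u, φ (-u) = φ u)
    (hφx : DifferentiableAt ℝ φ x) (hfx : DifferentiableAt ℝ f x) :
    dunklOp k (fun u => φ u * f u) x = deriv φ x * f x + φ x * dunklOp k f x := by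
  simp only [dunklOp, deriv_fun_mul hφx hfx, hφ]
  ring

/-- `E_k(w, 1) / Γ(k + 1/2)`. -/
noncomputable def dunklKernelReg (k w : ℝ) : ℝ :=
  besselSeries (k + 1/2) ((w / 2) ^ 2) + w / 2 * besselSeries (k + 3/2) ((w / 2) ^ 2)

lemma besselI_eq (α t : ℝ) :
    besselI α t = Gamma (α + 1) * besselSeries (α + 1) ((t / 2) ^ 2) := by
  rw [besselI, besselSeries]
  congr 1
  refine tsum_congr fun n => ?_
  rw [besselCoeff, ← pow_mul, ← add_assoc, div_eq_inv_mul]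

lemma dunklKernel_eq_Gamma_mul {k : ℝ} (hk : k + 1/2 ≠ 0) (z y : ℝ) :
    dunklKernel k z y = Gamma (k + 1/2) * dunklKernelReg k (z * y) := by
  rw [dunklKernel, dunklKernelReg, besselI_eq, besselI_eq,
    show k - 1/2 + 1 = k + 1/2 by ring, Gamma_add_one hk, show k + 1/2 + 1 = k + 3/2 by ring]
  have hhalf : (k + 1/2) / (2 * k + 1) = 1 / 2 := by
    rw [div_eq_iff (by contrapose! hk; linarith)]
    ring
  linear_combination z * y * Gamma (k + 1/2) * besselSeries (k + 3/2) ((z * y / 2) ^ 2) * hhalf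

lemma hasDerivAt_besselSeries_sq_half (a w : ℝ) :
    HasDerivAt (fun w => besselSeries a ((w / 2) ^ 2))
      (w / 2 * besselSeries (a + 1) ((w / 2) ^ 2)) w := by
  have hsq : HasDerivAt (fun w : ℝ => (w / 2) ^ 2) (w / 2) w :=
    (((hasDerivAt_id' w).div_const 2).fun_pow 2).congr_deriv (by norm_num; ring)
  exact ((hasDerivAt_besselSeries a _).comp w hsq).congr_deriv (mul_comm _ _)

lemma hasDerivAt_dunklKernelReg (k w : ℝ) :
    HasDerivAt (dunklKernelReg k)
      (w / 2 * besselSeries (k + 3/2) ((w / 2) ^ 2) + (1 / 2 * besselSeries (k + 3/2) ((w / 2) ^ 2)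
        + w / 2 * (w / 2 * besselSeries (k + 5/2) ((w / 2) ^ 2)))) w := by
  have h₁ := hasDerivAt_besselSeries_sq_half (k + 1/2) w
  have h₂ := hasDerivAt_besselSeries_sq_half (k + 3/2) w
  rw [show k + 1/2 + 1 = k + 3/2 by ring] at h₁
  rw [show k + 3/2 + 1 = k + 5/2 by ring] at h₂
  exact h₁.add (((hasDerivAt_id w).div_const 2).mul h₂)

theorem dunklOp_dunklKernelReg (k : ℝ) {w : ℝ} (hw : w ≠ 0) :
    dunklOp k (dunklKernelReg k) w = dunklKernelReg k w := by
  have hodd : dunklKernelReg k w - dunklKernelReg k (-w)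
      = w * besselSeries (k + 3/2) ((w / 2) ^ 2) := by
    simp only [dunklKernelReg, neg_div, neg_sq]
    ring
  have hrec := besselSeries_contiguous (k + 1/2) ((w / 2) ^ 2)
  rw [show k + 1/2 + 1 = k + 3/2 by ring, show k + 1/2 + 2 = k + 5/2 by ring] at hrec
  -- the derivative and the reflection term contribute `(1/2 + k) · besselSeries (k + 3/2)`,
  -- which the contiguous relation for `a = k + 1/2` absorbs
  rw [dunklOp, (hasDerivAt_dunklKernelReg k w).deriv, hodd, dunklKernelReg, hrec]
  field_simp
  ring

theorem dunklOp_dunklKernel {k : ℝ} (hk : k + 1/2 ≠ 0) (c y : ℝ) {x : ℝ} (hx : x ≠ 0) :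
    dunklOp k (fun u => dunklKernel k (c * u) y) x = c * y * dunklKernel k (c * x) y := by
  simp_rw [dunklKernel_eq_Gamma_mul hk, mul_right_comm c _ y]
  rw [dunklOp_const_mul, dunklOp_comp_mul_left (f := dunklKernelReg k)]
  rcases eq_or_ne (c * y) 0 with hcy | hcy
  · simp [hcy]
  · rw [dunklOp_dunklKernelReg k (mul_ne_zero hcy hx)]
    ring

lemma differentiable_dunklKernel {k : ℝ} (hk : k + 1/2 ≠ 0) (y : ℝ) :
    Differentiable ℝ fun z => dunklKernel k z y := by
  simp_rw [dunklKernel_eq_Gamma_mul hk]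
  exact fun z => ((hasDerivAt_dunklKernelReg k (z * y)).differentiableAt.comp z
    (differentiableAt_id.mul_const y)).const_mul _

theorem dunkl_deriv_mehler_type_kernel_general (k : ℝ) (hk : 0 ≤ k)
    (s : ℝ) (y : ℝ) (x : ℝ) (hx : x ≠ 0) :
    deriv (fun u : ℝ => Ks k s u y) x + k * (Ks k s x y - Ks k s (-x) y) / x
      = -(1/2) * (s * (x + y) + (1/s) * (x - y)) * Ks k s x y := by
  set c := (1 - s ^ 2) / (2 * s)
  set gauss : ℝ → ℝ := fun u => Real.exp (-(1/4) * (s + 1/s) * (u ^ 2 + y ^ 2))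
  have hKs : ∀ u, Ks k s u y = ck k * ((1 - s ^ 2) / (4 * s)) ^ (k + 1/2) *
      (gauss u * dunklKernel k (c * u) y) := fun u => by
    simp only [Ks, gauss, c]
    ring
  have hk' : k + 1/2 ≠ 0 := by positivity
  have hgauss : HasDerivAt gauss (-(1/2) * (s + 1/s) * x * gauss x) x :=
    (((hasDerivAt_pow 2 x).add_const (y ^ 2)).const_mul _).exp.congr_deriv
      (by simp [gauss]; ring)
  have hdiff : DifferentiableAt ℝ (fun u => dunklKernel k (c * u) y) x :=
    (differentiable_dunklKernel hk' y _).comp x (differentiableAt_id.const_mul c)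
  have hmult : c * y - (1/2) * (s + 1/s) * x = -(1/2) * (s * (x + y) + (1/s) * (x - y)) := by
    simp only [c]
    field_simp
    ring
  change dunklOp k (fun u => Ks k s u y) x = _
  simp_rw [hKs]
  rw [dunklOp_const_mul,
    dunklOp_even_mul k (fun u => by simp [gauss]) hgauss.differentiableAt hdiff, hgauss.deriv,
    dunklOp_dunklKernel hk' c y hx, ← hmult]
  ring

/-- The Dunkl derivative (in `x`) of the Mehler-type kernel:
`T_{k,x} K_s(x,y) = -(1/2)[s(x+y) + (1/s)(x-y)] K_s(x,y)`. -/
theorem dunkl_deriv_mehler_type_kernel (k : ℝ) (hk : 0 ≤ k)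
    (s : ℝ) (hs0 : 0 < s) (hs1 : s < 1) (y : ℝ) (x : ℝ) (hx : x ≠ 0) :
    deriv (fun u : ℝ => Ks k s u y) x + k * (Ks k s x y - Ks k s (-x) y) / x
      = -(1/2) * (s * (x + y) + (1/s) * (x - y)) * Ks k s x y :=
  dunkl_deriv_mehler_type_kernel_general k hk s y x hx
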